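/- The mutual coherence of any two orthonormal bases A, B of ℂ^N satisfies μ(A,B) ≥ N^{-1/2}, and this lower bound is attained by the discrete Fourier basis and the standard basis. -/

import Mathlib

/-!
The rows of `A` form an orthonormal basis, so by Parseval the squared moduli
`|⟨a_j, b_k⟩|²`, `j = 1, …, N`, of the coefficients of a fixed unit vector `b_k`
sum to `1`; one of them is therefore at least `1/N`. For the Fourier and standard
bases every inner product is a conjugated entry `N^{-1/2} e^{-2πi jk/N}`, of modulus
exactly `N^{-1/2}`.
-/

open Finset Real

/-- The mutual coherence `μ(A,B) = sup_{j,k} |⟨a_j, b_k⟩|` of two systems of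
vectors in `ℂ^N`. -/
noncomputable def mutualCoherence {N : ℕ} (A B : Fin N → Fin N → ℂ) : ℝ :=
  ⨆ j : Fin N, ⨆ k : Fin N, ‖∑ t, (starRingEnd ℂ) (A j t) * B k t‖

/-- The discrete Fourier basis vectors `φ_k(t) = N^{-1/2} e^{2πi tk/N}` of `ℂ^N`. -/
noncomputable def dftBasis (N : ℕ) (k t : Fin N) : ℂ :=
  ((1 / Real.sqrt N : ℝ) : ℂ) * Complex.exp (2 * π * Complex.I * t * k / N)

/-- The standard basis of `ℂ^N`. -/
def stdBasis (N : ℕ) (j t : Fin N) : ℂ := if t = j then 1 else 0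

open scoped InnerProductSpace ComplexConjugate

theorem Orthonormal.one_div_sqrt_card_le_iSup_norm_inner {𝕜 E ι : Type*} [RCLike 𝕜]
    [NormedAddCommGroup E] [InnerProductSpace 𝕜 E] [FiniteDimensional 𝕜 E] [Fintype ι]
    {v : ι → E} (hv : Orthonormal 𝕜 v) (hcard : Fintype.card ι = Module.finrank 𝕜 E)
    {x : E} (hx : ‖x‖ = 1) : 1 / √(Fintype.card ι) ≤ ⨆ i, ‖⟪v i, x⟫_𝕜‖ := by
  let b := OrthonormalBasis.mk hv (hv.linearIndependent.span_eq_top_of_card_eq_finrank' hcard).ge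
  have h := b.norm_le_card_mul_iSup_norm_inner x
  rw [hx, OrthonormalBasis.coe_mk] at h
  exact div_le_of_le_mul₀ (by positivity) (Real.iSup_nonneg fun _ => norm_nonneg _)
    (by rwa [mul_comm] at h)

theorem EuclideanSpace.inner_toLp_toLp_eq_sum {ι : Type*} [Fintype ι] (x y : ι → ℂ) :
    ⟪WithLp.toLp 2 x, WithLp.toLp 2 y⟫_ℂ = ∑ t, conj (x t) * y t := by
  simp [PiLp.inner_apply, mul_comm]

theorem orthonormal_toLp_of_sum_conj_mul {ι κ : Type*} [Fintype κ] [DecidableEq ι]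
    {v : ι → κ → ℂ} (hv : ∀ i j, ∑ t, conj (v i t) * v j t = if i = j then 1 else 0) :
    Orthonormal ℂ fun i => WithLp.toLp 2 (v i) := by
  rw [orthonormal_iff_ite]
  simpa [EuclideanSpace.inner_toLp_toLp_eq_sum] using hv

theorem norm_sum_conj_mul_le_mutualCoherence {N : ℕ} (A B : Fin N → Fin N → ℂ)
    (j k : Fin N) :
    ‖∑ t, conj (A j t) * B k t‖ ≤ mutualCoherence A B :=
  (le_ciSup (Finite.bddAbove_range _) k).trans
    (le_ciSup (f := fun j => ⨆ k, ‖∑ t, conj (A j t) * B k t‖) (Finite.bddAbove_range _) j)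

theorem one_div_sqrt_le_mutualCoherence {N : ℕ} (A B : Fin N → Fin N → ℂ)
    (hA : ∀ j₁ j₂, ∑ t, conj (A j₁ t) * A j₂ t = if j₁ = j₂ then 1 else 0)
    (hB : ∀ k₁ k₂, ∑ t, conj (B k₁ t) * B k₂ t = if k₁ = k₂ then 1 else 0) :
    1 / √N ≤ mutualCoherence A B := by
  cases N with
  | zero => simp [mutualCoherence]
  | succ n =>
    have hunit : ‖WithLp.toLp 2 (B 0)‖ = 1 := (orthonormal_toLp_of_sum_conj_mul hB).1 0
    have h := (orthonormal_toLp_of_sum_conj_mul hA).one_div_sqrt_card_le_iSup_norm_inner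
      (by simp) hunit
    simp only [Fintype.card_fin, EuclideanSpace.inner_toLp_toLp_eq_sum] at h
    exact h.trans (ciSup_le fun j => norm_sum_conj_mul_le_mutualCoherence A B j 0)

theorem norm_dftBasis (N : ℕ) (k t : Fin N) : ‖dftBasis N k t‖ = 1 / √N := by
  have h : 2 * π * Complex.I * t * k / N = ((2 * π * t * k / N : ℝ) : ℂ) * Complex.I := by
    push_cast; ring
  rw [dftBasis, norm_mul, h, Complex.norm_exp_ofReal_mul_I, mul_one, Complex.norm_real,
    Real.norm_of_nonneg (by positivity)]

theorem sum_conj_mul_stdBasis {N : ℕ} (v : Fin N → ℂ) (k : Fin N) :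
    ∑ t, conj (v t) * stdBasis N k t = conj (v k) := by
  simp [stdBasis]

theorem mutualCoherence_dftBasis_stdBasis (N : ℕ) :
    mutualCoherence (dftBasis N) (stdBasis N) = 1 / √N := by
  cases N with
  | zero => simp [mutualCoherence]
  | succ n =>
    simp only [mutualCoherence, sum_conj_mul_stdBasis, RCLike.norm_conj, norm_dftBasis,
      ciSup_const]

theorem stmt_16_general (N : ℕ) :
    (∀ A B : Fin N → Fin N → ℂ,
      (∀ j₁ j₂ : Fin N,
        (∑ t, (starRingEnd ℂ) (A j₁ t) * A j₂ t) = if j₁ = j₂ then 1 else 0) →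
      (∀ k₁ k₂ : Fin N,
        (∑ t, (starRingEnd ℂ) (B k₁ t) * B k₂ t) = if k₁ = k₂ then 1 else 0) →
      1 / Real.sqrt N ≤ mutualCoherence A B) ∧
    mutualCoherence (dftBasis N) (stdBasis N) = 1 / Real.sqrt N :=
  ⟨one_div_sqrt_le_mutualCoherence, mutualCoherence_dftBasis_stdBasis N⟩

/-- The mutual coherence of any two orthonormal bases of `ℂ^N` is at least
`N^{-1/2}`, and this lower bound is attained by the discrete Fourier basis and
the standard basis. -/
theorem stmt_16 (N : ℕ) (hN : 0 < N) :
    (∀ A B : Fin N → Fin N → ℂ,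
      (∀ j₁ j₂ : Fin N,
        (∑ t, (starRingEnd ℂ) (A j₁ t) * A j₂ t) = if j₁ = j₂ then 1 else 0) →
      (∀ k₁ k₂ : Fin N,
        (∑ t, (starRingEnd ℂ) (B k₁ t) * B k₂ t) = if k₁ = k₂ then 1 else 0) →
      1 / Real.sqrt N ≤ mutualCoherence A B) ∧
    mutualCoherence (dftBasis N) (stdBasis N) = 1 / Real.sqrt N :=
  stmt_16_general N
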